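/- Let d ≥ 1 be an integer, 0 < r ≤ 1, and let q ≥ 1 be a real number. There exists a constant C > 0, depending only on d, r and q, such that for all integers n ≥ 2, sup over K ∈ K_{d,r}^(1) of E_K[d_H(K̂ₙ,K)^q] ≤ C·(ln n / n)^{2q/(d+1)}. -/

import Mathlib

open MeasureTheory Metric Set
open scoped RealInnerProductSpace ENNReal NNReal

noncomputable section

abbrev Euc (d : ℕ) := EuclideanSpace ℝ (Fin d)

def IsConvexBody {d : ℕ} (K : Set (Euc d)) : Prop :=
  Convex ℝ K ∧ IsCompact K ∧ (interior K).Nonempty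

def suppFn {d : ℕ} (K : Set (Euc d)) (u : Euc d) : ℝ :=
  sSup ((fun x => (inner ℝ u x : ℝ)) '' K)

def cap {d : ℕ} (K : Set (Euc d)) (u : Euc d) (ε : ℝ) : Set (Euc d) :=
  {x ∈ K | suppFn K u - ε ≤ (inner ℝ u x : ℝ)}

def measSupp {d : ℕ} (μ : Measure (Euc d)) : Set (Euc d) :=
  (⋃₀ {O : Set (Euc d) | IsOpen O ∧ μ O = 0})ᶜ

def MemM {d : ℕ} (α L ε₀ : ℝ) (μ : Measure (Euc d)) (K : Set (Euc d)) : Prop :=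
  IsProbabilityMeasure μ ∧ IsConvexBody K ∧ K ⊆ closedBall 0 1 ∧
    measSupp μ ⊆ K ∧
    ∀ u : Euc d, ‖u‖ = 1 → ∀ ε : ℝ, ε ∈ Icc 0 ε₀ →
      ENNReal.ofReal (L * ε ^ α) ≤ μ (cap K u ε)

def Cconst (α : ℝ) : ℝ := ⨅ t : {t : ℝ // 0 < t}, (1 + t.1) ^ α / (1 + t.1 ^ α)

def hullOf {d n : ℕ} (ω : Fin n → Euc d) : Set (Euc d) := convexHull ℝ (Set.range ω)

def jointLaw {d : ℕ} (n : ℕ) (μ : Measure (Euc d)) : Measure (Fin n → Euc d) :=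
  Measure.pi fun _ => μ

def sphereσ (d : ℕ) : Measure (Euc d) :=
  (Measure.hausdorffMeasure ((d:ℝ)-1) (sphere (0:Euc d) 1))⁻¹ •
    (Measure.hausdorffMeasure ((d:ℝ)-1) : Measure (Euc d)).restrict (sphere (0:Euc d) 1)

def lpNorm (d : ℕ) (p : ℝ) (f : Euc d → ℝ) : ℝ :=
  (∫ u, |f u| ^ p ∂(sphereσ d)) ^ (1/p)

def unitBallVol (p : ℕ) : ℝ := (volume (closedBall (0 : Euc p) 1)).toReal

def unifOn {d : ℕ} (K : Set (Euc d)) : Measure (Euc d) := (volume K)⁻¹ • volume.restrict K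

def unifBd {d : ℕ} (K : Set (Euc d)) : Measure (Euc d) :=
  (Measure.hausdorffMeasure ((d:ℝ)-1) (frontier K))⁻¹ •
    (Measure.hausdorffMeasure ((d:ℝ)-1) : Measure (Euc d)).restrict (frontier K)

def Rolling {d : ℕ} (r : ℝ) (K : Set (Euc d)) : Prop :=
  ∀ x ∈ frontier K, ∃ c : Euc d, x ∈ closedBall c r ∧ closedBall c r ⊆ K

def Kdr1 (d : ℕ) (r : ℝ) : Set (Set (Euc d)) :=
  {K | IsConvexBody K ∧ K ⊆ closedBall 0 1 ∧ Rolling r K}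

def Krd (d : ℕ) (r : ℝ) : Set (Set (Euc d)) :=
  {K | IsConvexBody K ∧ Rolling (r * ((volume K).toReal / unitBallVol d) ^ (1/(d:ℝ))) K}

def dL {d : ℕ} (K K' : Set (Euc d)) : ℝ :=
  sInf {ε : ℝ | 0 ≤ ε ∧ ∃ a : Euc d,
    (fun y => a + (1 - ε) • (y - a)) '' K ⊆ K' ∧
    K' ⊆ (fun y => a + (1 + ε) • (y - a)) '' K}

/-!
Every direction `u` sees, at the top of `K`, a rolling ball of radius `r`; its cap of depth
`ε ≤ r` contains an ellipsoid with half-axes `ε / 2` and `√(r ε) / 2`, so, as `K` lies in the unit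
ball, every cap of `K` of depth `ε` has probability at least `c ε^((d+1)/2)`. If `K̂ₙ` is more than
`3ε` away from `K`, separating a far point of `K` from `K̂ₙ` yields a direction whose cap of depth
`3ε` contains no sample point, hence a direction of an `ε`-net of the sphere (of size at most
`(3/ε)^d`) whose cap of depth `ε` is empty. A union bound gives
`E d_H^q ≤ (3ε)^q + (3/ε)^d 2^q exp (-c n ε^((d+1)/2))`, and
`ε = (A log n / n)^(2/(d+1))` balances the two terms.
-/

open scoped Pointwise

section InnerProductGeometry

variable {E : Type*} [NormedAddCommGroup E] [InnerProductSpace ℝ E]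

lemma mem_frontier_of_forall_inner_le {K : Set E} (hK : IsClosed K) {u z : E} (hu : u ≠ 0)
    (hzK : z ∈ K) (hmax : ∀ y ∈ K, ⟪u, y⟫ ≤ ⟪u, z⟫) : z ∈ frontier K := by
  rw [hK.frontier_eq]
  refine ⟨hzK, fun hz => ?_⟩
  obtain ⟨δ, hδ, hball⟩ := Metric.isOpen_iff.1 isOpen_interior z hz
  have hupos : 0 < ‖u‖ := norm_pos_iff.2 hu
  set s := δ / (2 * ‖u‖)
  have hs : 0 < s := by positivity
  have hmem : z + s • u ∈ K := interior_subset <| hball <| by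
    rw [mem_ball, dist_self_add_left, norm_smul, Real.norm_eq_abs, abs_of_pos hs]
    have : s * ‖u‖ = δ / 2 := by simp only [s]; field_simp
    linarith
  have := hmax _ hmem
  rw [inner_add_right, real_inner_smul_right, real_inner_self_eq_norm_sq] at this
  nlinarith [pow_pos hupos 2]

lemma inner_center_add_eq_of_closedBall_subset {K : Set E} {u c z : E} {r : ℝ} (hu : ‖u‖ = 1)
    (hr : 0 ≤ r) (hzc : z ∈ closedBall c r) (hcK : closedBall c r ⊆ K)
    (hmax : ∀ y ∈ K, ⟪u, y⟫ ≤ ⟪u, z⟫) : ⟪u, c⟫ + r = ⟪u, z⟫ := by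
  have htop : c + r • u ∈ K := hcK <| by
    rw [mem_closedBall, dist_self_add_left, norm_smul, hu, mul_one, Real.norm_eq_abs,
      abs_of_nonneg hr]
  have hle := hmax _ htop
  rw [inner_add_right, real_inner_smul_right, real_inner_self_eq_norm_sq, hu] at hle
  have hge : ⟪u, z - c⟫ ≤ r := by
    calc ⟪u, z - c⟫ ≤ ‖u‖ * ‖z - c‖ := real_inner_le_norm u (z - c)
      _ ≤ r := by rw [hu, one_mul, ← dist_eq_norm]; exact hzc
  rw [inner_sub_right] at hge
  linarith

def axialScaling (u : E) (a ρ : ℝ) : E →ₗ[ℝ] E :=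
  ρ • LinearMap.id + (a - ρ) • (innerₛₗ ℝ u).smulRight u

lemma axialScaling_apply (u : E) (a ρ : ℝ) (w : E) :
    axialScaling u a ρ w = (a * ⟪u, w⟫) • u + ρ • (w - ⟪u, w⟫ • u) := by
  simp only [axialScaling, LinearMap.add_apply, LinearMap.smul_apply, LinearMap.id_apply,
    LinearMap.smulRight_apply, innerₛₗ_apply_apply]
  module

lemma norm_sq_add_of_inner_eq_zero {u w : E} (hu : ‖u‖ = 1) (huw : ⟪u, w⟫ = 0) (a b : ℝ) :
    ‖a • u + b • w‖ ^ 2 = a ^ 2 + b ^ 2 * ‖w‖ ^ 2 := by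
  rw [norm_add_sq_real, real_inner_smul_left, real_inner_smul_right, huw, norm_smul, norm_smul,
    Real.norm_eq_abs, Real.norm_eq_abs, hu]
  simp only [mul_pow, sq_abs]
  ring

lemma vadd_image_axialScaling_subset {u c : E} (hu : ‖u‖ = 1) {r ε : ℝ} (hε : 0 < ε)
    (hεr : ε ≤ r) :
    (c + (r - ε / 2) • u) +ᵥ axialScaling u (ε / 2) (√(r * ε) / 2) '' closedBall 0 1 ⊆
      closedBall c r ∩ {x | ⟪u, c⟫ + r - ε ≤ ⟪u, x⟫} := by
  rintro _ ⟨_, ⟨w, hw, rfl⟩, rfl⟩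
  rw [mem_closedBall_zero_iff] at hw
  have hr : 0 < r := hε.trans_le hεr
  set t := ⟪u, w⟫
  set w' := w - t • u
  set ρ := √(r * ε) / 2
  have hρ : ρ ^ 2 = r * ε / 4 := by
    rw [div_pow, Real.sq_sqrt (by nlinarith)]; ring
  have hw' : ⟪u, w'⟫ = 0 := by
    rw [inner_sub_right, real_inner_smul_right, real_inner_self_eq_norm_sq, hu]; ring
  have hnorm : t ^ 2 + ‖w'‖ ^ 2 ≤ 1 := by
    have hsplit : w = t • u + (1 : ℝ) • w' := by simp [w']
    have := norm_sq_add_of_inner_eq_zero hu hw' t 1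
    rw [← hsplit, one_pow, one_mul] at this
    nlinarith [norm_nonneg w]
  have ht : |t| ≤ 1 := by nlinarith [sq_abs t, abs_nonneg t, sq_nonneg ‖w'‖]
  obtain ⟨ht₁, ht₂⟩ := abs_le.1 ht
  set a := r - ε / 2 * (1 - t)
  have hpt : (c + (r - ε / 2) • u) +ᵥ axialScaling u (ε / 2) ρ w = c + (a • u + ρ • w') := by
    rw [vadd_eq_add, axialScaling_apply]; module
  simp only [hpt]
  constructor
  · rw [mem_closedBall, dist_self_add_left, ← abs_norm, ← abs_of_nonneg (by linarith : 0 ≤ r),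
      ← sq_le_sq, norm_sq_add_of_inner_eq_zero hu hw', hρ]
    -- `a² + ρ²(1 - t²) ≤ r²` reduces to `ε (1 - t) (ε (1 - t) + r (1 + t) - 4 r) ≤ 0`
    have key : 0 ≤ ε * (1 - t) * (4 * r - ε * (1 - t) - r * (1 + t)) :=
      mul_nonneg (by nlinarith) (by nlinarith)
    simp only [a]
    nlinarith [mul_le_mul_of_nonneg_left (by linarith : ‖w'‖ ^ 2 ≤ 1 - t ^ 2)
      (by positivity : 0 ≤ r * ε / 4)]
  · simp only [Set.mem_ofPred_eq, inner_add_right, real_inner_smul_right, hw',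
      real_inner_self_eq_norm_sq, hu, a]
    nlinarith

end InnerProductGeometry

lemma det_axialScaling {d : ℕ} (hd : 1 ≤ d) {u : Euc d} (hu : ‖u‖ = 1) (a : ℝ) {ρ : ℝ}
    (hρ : ρ ≠ 0) : LinearMap.det (axialScaling u a ρ) = ρ ^ (d - 1) * a := by
  set b := (EuclideanSpace.basisFun (Fin d) ℝ).toBasis
  have hmat : LinearMap.toMatrix b b (axialScaling u a ρ) = ρ • (1 + Matrix.replicateCol Unit
      (((a - ρ) / ρ) • WithLp.ofLp u) * Matrix.replicateRow Unit (WithLp.ofLp u)) := by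
    ext i j
    rw [LinearMap.toMatrix_apply, axialScaling_apply]
    by_cases hij : i = j <;>
      simp [b, hij, EuclideanSpace.inner_single_right, ← Matrix.vecMulVec_eq,
        Matrix.vecMulVec_apply] <;> field_simp <;> ring
  have huu : WithLp.ofLp u ⬝ᵥ WithLp.ofLp u = 1 := by
    simpa [real_inner_self_eq_norm_sq, hu] using (EuclideanSpace.inner_eq_star_dotProduct u u).symm
  rw [← LinearMap.det_toMatrix b, hmat, Matrix.det_smul,
    Matrix.det_one_add_replicateCol_mul_replicateRow, dotProduct_smul, huu, Fintype.card_fin]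
  obtain ⟨k, rfl⟩ := Nat.exists_eq_add_of_le' hd
  rw [Nat.add_sub_cancel, pow_succ, smul_eq_mul, mul_one]
  field_simp
  ring

lemma exists_forall_inner_le_eq_suppFn {d : ℕ} {K : Set (Euc d)} (hK : IsCompact K)
    (hne : K.Nonempty) (u : Euc d) :
    ∃ z ∈ K, (∀ y ∈ K, ⟪u, y⟫ ≤ ⟪u, z⟫) ∧ suppFn K u = ⟪u, z⟫ := by
  obtain ⟨z, hzK, hz⟩ := hK.exists_isMaxOn hne (innerSL ℝ u).continuous.continuousOn
  refine ⟨z, hzK, fun y hy => hz hy, ?_⟩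
  exact IsGreatest.csSup_eq ⟨⟨z, hzK, rfl⟩, by rintro _ ⟨y, hy, rfl⟩; exact hz hy⟩

lemma volume_vadd_image_axialScaling {d : ℕ} (hd : 1 ≤ d) {u : Euc d} (hu : ‖u‖ = 1) (v : Euc d)
    {a ρ : ℝ} (ha : 0 ≤ a) (hρ : 0 < ρ) :
    volume (v +ᵥ axialScaling u a ρ '' closedBall 0 1) =
      ENNReal.ofReal (ρ ^ (d - 1) * a) * volume (closedBall (0 : Euc d) 1) := by
  rw [measure_vadd, Measure.addHaar_image_linearMap, det_axialScaling hd hu a hρ.ne',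
    abs_of_nonneg (by positivity)]

lemma volume_div_le_unifOn {d : ℕ} {K S : Set (Euc d)} (hK : K ⊆ closedBall 0 1) (hS : S ⊆ K) :
    volume S / volume (closedBall (0 : Euc d) 1) ≤ unifOn K S := by
  rw [unifOn, Measure.smul_apply, Measure.restrict_eq_self _ hS, smul_eq_mul, div_eq_mul_inv,
    mul_comm]
  gcongr

lemma le_unifOn_cap {d : ℕ} (hd : 1 ≤ d) {r : ℝ} {K : Set (Euc d)} (hK : K ∈ Kdr1 d r)
    {u : Euc d} (hu : ‖u‖ = 1) {ε : ℝ} (hε : 0 < ε) (hεr : ε ≤ r) :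
    ENNReal.ofReal ((√(r * ε) / 2) ^ (d - 1) * (ε / 2)) ≤ unifOn K (cap K u ε) := by
  obtain ⟨⟨-, hcpt, hint⟩, hsub, hroll⟩ := hK
  obtain ⟨z, hzK, hmax, hsupp⟩ :=
    exists_forall_inner_le_eq_suppFn hcpt (hint.mono interior_subset) u
  obtain ⟨c, hzc, hcK⟩ := hroll z <|
    mem_frontier_of_forall_inner_le hcpt.isClosed (ne_zero_of_norm_ne_zero (by simp [hu])) hzK hmax
  have hc := inner_center_add_eq_of_closedBall_subset hu (hε.le.trans hεr) hzc hcK hmax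
  have hellipsoid : (c + (r - ε / 2) • u) +ᵥ axialScaling u (ε / 2) (√(r * ε) / 2) ''
      closedBall 0 1 ⊆ cap K u ε := fun x hx => by
    obtain ⟨hxc, hxu⟩ := vadd_image_axialScaling_subset hu hε hεr hx
    exact ⟨hcK hxc, by rw [hsupp, ← hc]; exact hxu⟩
  have hBpos : volume (closedBall (0 : Euc d) 1) ≠ 0 := (measure_closedBall_pos _ _ one_pos).ne'
  calc ENNReal.ofReal ((√(r * ε) / 2) ^ (d - 1) * (ε / 2))
      = volume ((c + (r - ε / 2) • u) +ᵥ axialScaling u (ε / 2) (√(r * ε) / 2) ''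
          closedBall 0 1) / volume (closedBall (0 : Euc d) 1) := by
        rw [volume_vadd_image_axialScaling hd hu _ (by positivity)
          (by have := hε.trans_le hεr; positivity), ENNReal.mul_div_cancel_right hBpos
          measure_closedBall_lt_top.ne]
    _ ≤ volume (cap K u ε) / volume (closedBall (0 : Euc d) 1) := by gcongr
    _ ≤ unifOn K (cap K u ε) := volume_div_le_unifOn hsub fun x hx => hx.1

section Packing

open Module

variable {E : Type*} [NormedAddCommGroup E] [NormedSpace ℝ E] [FiniteDimensional ℝ E]
  [MeasurableSpace E] [BorelSpace E]

/-- Volume argument: the balls of radius `ε / 2` around the points are disjoint and lie in the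
ball of radius `1 + ε / 2`. -/
lemma card_le_of_pairwise_lt_dist {ε : ℝ} (hε : 0 < ε) {C : Finset E}
    (hC : ↑C ⊆ closedBall (0 : E) 1) (hsep : (C : Set E).Pairwise fun x y => ε < dist x y) :
    (C.card : ℝ) ≤ (1 + 2 / ε) ^ finrank ℝ E := by
  set μ : Measure E := Measure.addHaar
  have hdisj : (C : Set E).PairwiseDisjoint fun x => closedBall x (ε / 2) :=
    fun x hx y hy hxy => closedBall_disjoint_closedBall (by linarith [hsep hx hy hxy])
  have hunion : ⋃ x ∈ C, closedBall x (ε / 2) ⊆ closedBall (0 : E) (1 + ε / 2) :=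
    iUnion₂_subset fun x hx => closedBall_subset_closedBall' <| by
      rw [dist_zero_right]; linarith [mem_closedBall_zero_iff.1 (hC hx)]
  have hvol := (measure_biUnion_finset hdisj fun x _ => measurableSet_closedBall).symm.trans_le
    (measure_mono (μ := μ) hunion)
  simp only [Measure.addHaar_closedBall' μ _ (by positivity : 0 ≤ ε / 2),
    Measure.addHaar_closedBall' μ _ (by positivity : 0 ≤ 1 + ε / 2), Finset.sum_const,
    nsmul_eq_mul, ← mul_assoc] at hvol
  have hB : μ (closedBall 0 1) ≠ 0 := (measure_closedBall_pos μ 0 one_pos).ne'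
  rw [ENNReal.mul_le_mul_iff_left hB measure_closedBall_lt_top.ne, ← ENNReal.ofReal_natCast,
    ← ENNReal.ofReal_mul (by positivity),
    ENNReal.ofReal_le_ofReal_iff (by positivity)] at hvol
  have hpow : (1 + 2 / ε) ^ finrank ℝ E * (ε / 2) ^ finrank ℝ E = (1 + ε / 2) ^ finrank ℝ E := by
    rw [← mul_pow]; congr 1; field_simp; ring
  rw [← mul_le_mul_iff_of_pos_right (by positivity : 0 < (ε / 2) ^ finrank ℝ E), hpow]
  exact hvol

lemma exists_finset_forall_dist_le {A : Set E} (hA : A ⊆ closedBall 0 1) {ε : ℝ} (hε : 0 < ε) :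
    ∃ S : Finset E, ↑S ⊆ A ∧ (∀ x ∈ A, ∃ y ∈ S, dist x y ≤ ε) ∧
      (S.card : ℝ) ≤ (1 + 2 / ε) ^ finrank ℝ E := by
  set δ := ε.toNNReal
  have hcard : ∀ C : Finset E, ↑C ⊆ A → IsSeparated δ (C : Set E) →
      (C.card : ℝ) ≤ (1 + 2 / ε) ^ finrank ℝ E := fun C hCA hsep =>
    card_le_of_pairwise_lt_dist hε (hCA.trans hA) fun x hx y hy hxy => by
      simpa [δ, edist_dist, hε.le] using hsep hx hy hxy
  set M := ⌊(1 + 2 / ε) ^ finrank ℝ E⌋₊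
  have hM : ∀ C : Finset E, ↑C ⊆ A → IsSeparated δ (C : Set E) → C.card ≤ M :=
    fun C hCA hsep => Nat.le_floor (hcard C hCA hsep)
  have hfin : ∀ C ⊆ A, IsSeparated δ C → C.Finite := fun C hCA hsep => by
    by_contra hinf
    obtain ⟨F, hFC, hF⟩ := Set.Infinite.exists_subset_card_eq hinf (M + 1)
    have := hM F (hFC.trans hCA) (hsep.subset hFC)
    omega
  have hpack : packingNumber δ A ≠ ⊤ := by
    refine ne_top_of_le_ne_top (ENat.natCast_ne_top M)
      (iSup₂_le fun C hCA => iSup_le fun hsep => ?_)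
    lift C to Finset E using hfin C hCA hsep
    simpa using hM C hCA hsep
  have hSfin := hfin _ maximalSeparatedSet_subset isSeparated_maximalSeparatedSet
  refine ⟨hSfin.toFinset, by simpa using maximalSeparatedSet_subset, fun x hx => ?_,
    hcard _ (by simpa using maximalSeparatedSet_subset)
      (by simpa using isSeparated_maximalSeparatedSet)⟩
  obtain ⟨y, hy, hxy⟩ := isCover_maximalSeparatedSet hpack hx
  exact ⟨y, by simpa using hy, by simpa [δ, edist_dist, hε.le] using hxy⟩

end Packing

instance {d : ℕ} (K : Set (Euc d)) : IsZeroOrProbabilityMeasure (unifOn K) :=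
  inferInstanceAs (IsZeroOrProbabilityMeasure (ProbabilityTheory.cond volume K))

instance {d n : ℕ} (μ : Measure (Euc d)) [IsProbabilityMeasure μ] :
    IsProbabilityMeasure (jointLaw n μ) := by
  rw [jointLaw]; infer_instance

lemma IsConvexBody.isProbabilityMeasure_unifOn {d : ℕ} {K : Set (Euc d)} (hK : IsConvexBody K) :
    IsProbabilityMeasure (unifOn K) :=
  ProbabilityTheory.cond_isProbabilityMeasure_of_finite
    (Measure.measure_pos_of_nonempty_interior volume hK.2.2).ne' hK.2.1.measure_lt_top.ne

lemma ae_jointLaw_unifOn_forall_mem {d n : ℕ} {K : Set (Euc d)} (hK : MeasurableSet K) :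
    ∀ᵐ ω ∂jointLaw n (unifOn K), ∀ i, ω i ∈ K :=
  Filter.eventually_all.2 fun _ => Measure.tendsto_eval_ae_ae.eventually
    (ProbabilityTheory.ae_cond_mem hK)

lemma jointLaw_pi_compl_le {d n : ℕ} {μ : Measure (Euc d)} [IsProbabilityMeasure μ]
    {c : Set (Euc d)} (hc : MeasurableSet c) {p : ℝ} (hp : 0 ≤ p) (hpc : ENNReal.ofReal p ≤ μ c) :
    jointLaw n μ (Set.pi univ fun _ => cᶜ) ≤ ENNReal.ofReal (Real.exp (-(n * p))) := by
  have hcompl : μ cᶜ ≤ ENNReal.ofReal (Real.exp (-p)) := by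
    rw [prob_compl_eq_one_sub hc]
    calc 1 - μ c ≤ 1 - ENNReal.ofReal p := by gcongr
      _ = ENNReal.ofReal (1 - p) := by rw [ENNReal.ofReal_sub _ hp, ENNReal.ofReal_one]
      _ ≤ ENNReal.ofReal (Real.exp (-p)) := by
        gcongr; linarith [Real.add_one_le_exp (-p)]
  rw [jointLaw, Measure.pi_pi, Finset.prod_const, Finset.card_univ, Fintype.card_fin]
  calc μ cᶜ ^ n ≤ ENNReal.ofReal (Real.exp (-p)) ^ n := by gcongr
    _ = ENNReal.ofReal (Real.exp (-(n * p))) := by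
      rw [← ENNReal.ofReal_pow (Real.exp_pos _).le, ← Real.exp_nat_mul, mul_neg]

section Separation

variable {E : Type*} [NormedAddCommGroup E] [InnerProductSpace ℝ E]

lemma inner_le_inner_add_norm_sub {x : E} (hx : ‖x‖ ≤ 1) (u v : E) :
    ⟪u, x⟫ ≤ ⟪v, x⟫ + ‖u - v‖ := by
  have := real_inner_le_norm (u - v) x
  rw [inner_sub_left] at this
  nlinarith [norm_nonneg (u - v)]

/-- A point of `K` far from the convex set `H` is separated from `H` by the hyperplane through its
nearest point in `H`, orthogonal to the direction towards it. -/
lemma exists_forall_inner_add_lt_of_lt_hausdorffDist {H K : Set E} (hH : Convex ℝ H)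
    (hHc : IsCompact H) (hHne : H.Nonempty) (hHK : H ⊆ K) {δ : ℝ} (hδ : 0 ≤ δ)
    (h : δ < hausdorffDist H K) : ∃ u, ‖u‖ = 1 ∧ ∃ x ∈ K, ∀ w ∈ H, ⟪u, w⟫ + δ < ⟪u, x⟫ := by
  obtain ⟨x, hxK, hx⟩ : ∃ x ∈ K, δ < infDist x H := by
    by_contra! hcon
    refine h.not_ge (hausdorffDist_le_of_infDist hδ (fun y hy => ?_) hcon)
    rw [infDist_zero_of_mem (hHK hy)]; exact hδ
  obtain ⟨p, hpH, hp⟩ := hHc.exists_infDist_eq_dist hHne x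
  rw [hp, dist_eq_norm] at hx
  have hobtuse : ∀ w ∈ H, ⟪x - p, w - p⟫ ≤ 0 := by
    refine (norm_eq_iInf_iff_real_inner_le_zero hH hpH).1 ?_
    simpa only [infDist_eq_iInf, dist_eq_norm] using hp.symm
  have hxp : 0 < ‖x - p‖ := hδ.trans_lt hx
  refine ⟨‖x - p‖⁻¹ • (x - p), by rw [norm_smul, norm_inv, norm_norm, inv_mul_cancel₀ hxp.ne'],
    x, hxK, fun w hw => ?_⟩
  have hw := mul_nonpos_of_nonneg_of_nonpos (inv_nonneg.2 hxp.le) (hobtuse w hw)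
  have hx' : ‖x - p‖⁻¹ * ⟪x - p, x - p⟫ = ‖x - p‖ := by
    rw [real_inner_self_eq_norm_sq]; field_simp
  rw [real_inner_smul_left, real_inner_smul_left]
  rw [inner_sub_right, mul_sub] at hw
  rw [inner_sub_right, mul_sub] at hx'
  linarith

end Separation

lemma hausdorffDist_le_two {d : ℕ} {A B : Set (Euc d)} (hA : A ⊆ closedBall 0 1)
    (hB : B ⊆ closedBall 0 1) : hausdorffDist A B ≤ 2 := by
  rcases A.eq_empty_or_nonempty with rfl | hAne
  · simp
  rcases B.eq_empty_or_nonempty with rfl | hBne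
  · simp
  calc hausdorffDist A B ≤ diam (A ∪ B) :=
        hausdorffDist_le_diam hAne (isBounded_closedBall.subset hA) hBne
          (isBounded_closedBall.subset hB)
    _ ≤ diam (closedBall (0 : Euc d) 1) := diam_mono (union_subset hA hB) isBounded_closedBall
    _ ≤ 2 := by simpa using diam_closedBall (x := (0 : Euc d)) zero_le_one

lemma inner_le_suppFn {d : ℕ} {K : Set (Euc d)} (hK : IsCompact K) {x : Euc d} (hx : x ∈ K)
    (u : Euc d) : ⟪u, x⟫ ≤ suppFn K u :=
  le_csSup (hK.image (innerSL ℝ u).continuous).bddAbove ⟨x, hx, rfl⟩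

lemma suppFn_le_suppFn_add_norm_sub {d : ℕ} {K : Set (Euc d)} (hK : IsCompact K)
    (hne : K.Nonempty) (hsub : K ⊆ closedBall 0 1) (u v : Euc d) :
    suppFn K u ≤ suppFn K v + ‖u - v‖ := by
  refine csSup_le (hne.image _) ?_
  rintro _ ⟨x, hx, rfl⟩
  linarith [inner_le_suppFn hK hx v,
    inner_le_inner_add_norm_sub (mem_closedBall_zero_iff.1 (hsub hx)) u v]

lemma cap_subset_cap_add_two_mul_norm_sub {d : ℕ} {K : Set (Euc d)} (hK : IsCompact K)
    (hne : K.Nonempty) (hsub : K ⊆ closedBall 0 1) (u v : Euc d) (δ : ℝ) :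
    cap K v δ ⊆ cap K u (δ + 2 * ‖u - v‖) := by
  rintro x ⟨hxK, hx⟩
  refine ⟨hxK, ?_⟩
  have := suppFn_le_suppFn_add_norm_sub hK hne hsub u v
  have := inner_le_inner_add_norm_sub (mem_closedBall_zero_iff.1 (hsub hxK)) v u
  rw [norm_sub_rev] at this
  linarith

lemma exists_forall_notMem_cap_of_lt_hausdorffDist {d n : ℕ} {K : Set (Euc d)}
    (hconv : Convex ℝ K) (hK : IsCompact K) (hsub : K ⊆ closedBall 0 1) {ε : ℝ} (hε : 0 ≤ ε)
    {S : Finset (Euc d)} (hS : ∀ u : Euc d, ‖u‖ = 1 → ∃ v ∈ S, ‖u - v‖ ≤ ε)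
    {ω : Fin n → Euc d} (hω : ∀ i, ω i ∈ K) (h : 3 * ε < hausdorffDist (hullOf ω) K) :
    ∃ v ∈ S, ∀ i, ω i ∉ cap K v ε := by
  have hHK : hullOf ω ⊆ K := convexHull_min (range_subset_iff.2 hω) hconv
  have hHne : (hullOf ω).Nonempty := by
    by_contra hempty
    rw [not_nonempty_iff_eq_empty.1 hempty, hausdorffDist_empty'] at h
    linarith
  obtain ⟨u, hu, x, hxK, hsep⟩ := exists_forall_inner_add_lt_of_lt_hausdorffDist
    (convex_convexHull ℝ _) ((finite_range ω).isCompact_convexHull ℝ) hHne hHK (by linarith) h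
  obtain ⟨v, hvS, huv⟩ := hS u hu
  refine ⟨v, hvS, fun i hi => ?_⟩
  obtain ⟨-, hi⟩ := cap_subset_cap_add_two_mul_norm_sub hK (hHne.mono hHK) hsub u v ε hi
  linarith [inner_le_suppFn hK hxK u, hsep (ω i) (subset_convexHull ℝ _ (mem_range_self i))]

lemma hausdorffDist_hullOf_le_two {d n : ℕ} {K : Set (Euc d)} (hconv : Convex ℝ K)
    (hsub : K ⊆ closedBall 0 1) {ω : Fin n → Euc d} (hω : ∀ i, ω i ∈ K) :
    hausdorffDist (hullOf ω) K ≤ 2 :=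
  hausdorffDist_le_two ((convexHull_min (range_subset_iff.2 hω) hconv).trans hsub) hsub

lemma lintegral_hausdorffDist_rpow_le_two_rpow {d n : ℕ} {r q : ℝ} (hq : 0 ≤ q) {K : Set (Euc d)}
    (hK : K ∈ Kdr1 d r) :
    ∫⁻ ω, ENNReal.ofReal (hausdorffDist (hullOf ω) K ^ q) ∂(jointLaw n (unifOn K))
      ≤ ENNReal.ofReal (2 ^ q) := by
  obtain ⟨⟨hconv, hcpt, hint⟩, hsub, -⟩ := hK
  have := IsConvexBody.isProbabilityMeasure_unifOn ⟨hconv, hcpt, hint⟩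
  calc ∫⁻ ω, ENNReal.ofReal (hausdorffDist (hullOf ω) K ^ q) ∂(jointLaw n (unifOn K))
      ≤ ∫⁻ _, ENNReal.ofReal (2 ^ q) ∂(jointLaw n (unifOn K)) := by
        refine lintegral_mono_ae ?_
        filter_upwards [ae_jointLaw_unifOn_forall_mem hcpt.isClosed.measurableSet] with ω hω
        exact ENNReal.ofReal_le_ofReal <| Real.rpow_le_rpow hausdorffDist_nonneg
          (hausdorffDist_hullOf_le_two hconv hsub hω) hq
    _ = ENNReal.ofReal (2 ^ q) := by simp

lemma measurableSet_cap {d : ℕ} {K : Set (Euc d)} (hK : IsClosed K) (u : Euc d) (ε : ℝ) :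
    MeasurableSet (cap K u ε) :=
  (hK.inter (isClosed_le continuous_const (innerSL ℝ u).continuous)).measurableSet

lemma hausdorffDist_rpow_le_add_sum_indicator {d n : ℕ} {K : Set (Euc d)} (hconv : Convex ℝ K)
    (hK : IsCompact K) (hsub : K ⊆ closedBall 0 1) {q ε : ℝ} (hq : 0 ≤ q) (hε : 0 ≤ ε)
    {S : Finset (Euc d)} (hS : ∀ u : Euc d, ‖u‖ = 1 → ∃ v ∈ S, ‖u - v‖ ≤ ε)
    {ω : Fin n → Euc d} (hω : ∀ i, ω i ∈ K) :
    ENNReal.ofReal (hausdorffDist (hullOf ω) K ^ q) ≤ ENNReal.ofReal ((3 * ε) ^ q) +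
      ∑ v ∈ S, (Set.pi univ fun _ => (cap K v ε)ᶜ).indicator
        (fun _ => ENNReal.ofReal (2 ^ q)) ω := by
  rcases le_or_gt (hausdorffDist (hullOf ω) K) (3 * ε) with hclose | hfar
  · exact le_add_right (ENNReal.ofReal_le_ofReal
      (Real.rpow_le_rpow hausdorffDist_nonneg hclose hq))
  obtain ⟨v, hvS, hv⟩ := exists_forall_notMem_cap_of_lt_hausdorffDist hconv hK hsub hε hS hω hfar
  refine le_add_left (le_trans ?_ (Finset.single_le_sum (fun _ _ => zero_le) hvS))
  rw [indicator_of_mem (show ω ∈ Set.pi univ fun _ => (cap K v ε)ᶜ from fun i _ => hv i)]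
  exact ENNReal.ofReal_le_ofReal <| Real.rpow_le_rpow hausdorffDist_nonneg
    (hausdorffDist_hullOf_le_two hconv hsub hω) hq

lemma lintegral_hausdorffDist_rpow_le_of_le {d n : ℕ} (hd : 1 ≤ d) {r q : ℝ} (hq : 0 ≤ q)
    {K : Set (Euc d)} (hK : K ∈ Kdr1 d r) {ε : ℝ} (hε : 0 < ε) (hεr : ε ≤ r) :
    ∫⁻ ω, ENNReal.ofReal (hausdorffDist (hullOf ω) K ^ q) ∂(jointLaw n (unifOn K))
      ≤ ENNReal.ofReal ((3 * ε) ^ q + (1 + 2 / ε) ^ d * 2 ^ q *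
          Real.exp (-(n * ((√(r * ε) / 2) ^ (d - 1) * (ε / 2))))) := by
  obtain ⟨⟨hconv, hcpt, hint⟩, hsub, hroll⟩ := hK
  have := IsConvexBody.isProbabilityMeasure_unifOn ⟨hconv, hcpt, hint⟩
  set p := (√(r * ε) / 2) ^ (d - 1) * (ε / 2)
  obtain ⟨S, hSsphere, hSnet, hScard⟩ := exists_finset_forall_dist_le
    (sphere_subset_closedBall : sphere (0 : Euc d) 1 ⊆ _) hε
  rw [finrank_euclideanSpace_fin] at hScard
  set miss : Euc d → Set (Fin n → Euc d) := fun v => Set.pi univ fun _ => (cap K v ε)ᶜ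
  have hmiss (v : Euc d) : MeasurableSet (miss v) :=
    .univ_pi fun _ => (measurableSet_cap hcpt.isClosed v ε).compl
  calc ∫⁻ ω, ENNReal.ofReal (hausdorffDist (hullOf ω) K ^ q) ∂(jointLaw n (unifOn K))
      ≤ ∫⁻ ω, ENNReal.ofReal ((3 * ε) ^ q) +
          ∑ v ∈ S, (miss v).indicator (fun _ => ENNReal.ofReal (2 ^ q)) ω
          ∂(jointLaw n (unifOn K)) := by
        refine lintegral_mono_ae ?_
        filter_upwards [ae_jointLaw_unifOn_forall_mem hcpt.isClosed.measurableSet] with ω hω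
        exact hausdorffDist_rpow_le_add_sum_indicator hconv hcpt hsub hq hε.le
          (fun u hu => by simpa [dist_eq_norm] using hSnet u (by simpa using hu)) hω
    _ = ENNReal.ofReal ((3 * ε) ^ q) +
          ∑ v ∈ S, ENNReal.ofReal (2 ^ q) * jointLaw n (unifOn K) (miss v) := by
        rw [lintegral_add_left measurable_const, lintegral_finsetSum _
          fun v _ => measurable_const.indicator (hmiss v)]
        simp [lintegral_indicator_const (hmiss _)]
    _ ≤ ENNReal.ofReal ((3 * ε) ^ q) +
          ∑ _v ∈ S, ENNReal.ofReal (2 ^ q) * ENNReal.ofReal (Real.exp (-(n * p))) := by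
        gcongr with v hv
        exact jointLaw_pi_compl_le (measurableSet_cap hcpt.isClosed v ε) (by positivity)
          (le_unifOn_cap hd ⟨⟨hconv, hcpt, hint⟩, hsub, hroll⟩ (by simpa using hSsphere hv) hε hεr)
    _ ≤ ENNReal.ofReal ((3 * ε) ^ q + (1 + 2 / ε) ^ d * 2 ^ q * Real.exp (-(n * p))) := by
        rw [Finset.sum_const, nsmul_eq_mul, ← ENNReal.ofReal_mul (by positivity),
          ← ENNReal.ofReal_natCast, ← ENNReal.ofReal_mul (by positivity),
          ← ENNReal.ofReal_add (by positivity) (by positivity), mul_assoc _ (2 ^ q)]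
        gcongr

lemma sqrt_mul_div_two_pow_mul_div_two {d : ℕ} (hd : 1 ≤ d) {r ε : ℝ} (hr : 0 ≤ r) (hε : 0 ≤ ε) :
    (√(r * ε) / 2) ^ (d - 1) * (ε / 2) =
      r ^ (((d : ℝ) - 1) / 2) / 2 ^ d * ε ^ (((d : ℝ) + 1) / 2) := by
  obtain ⟨k, rfl⟩ := Nat.exists_eq_add_of_le' hd
  have hk : ((k + 1 : ℕ) : ℝ) - 1 = k := by push_cast; ring
  have hk' : (((k + 1 : ℕ) : ℝ) + 1) / 2 = k / 2 + 1 := by push_cast; ring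
  rw [Nat.add_sub_cancel, hk, hk', div_pow, Real.sqrt_eq_rpow, ← Real.rpow_natCast,
    ← Real.rpow_mul (by positivity), Real.mul_rpow hr hε, Real.rpow_add_one' hε (by positivity),
    pow_succ]
  ring_nf

lemma lintegral_hausdorffDist_rpow_le {d n : ℕ} (hd : 1 ≤ d) {r q : ℝ} (hr0 : 0 < r)
    (hr1 : r ≤ 1) (hq : 0 ≤ q) {K : Set (Euc d)} (hK : K ∈ Kdr1 d r) {ε : ℝ} (hε : 0 < ε) :
    ∫⁻ ω, ENNReal.ofReal (hausdorffDist (hullOf ω) K ^ q) ∂(jointLaw n (unifOn K))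
      ≤ ENNReal.ofReal ((3 * ε / r) ^ q + (3 / ε) ^ (d + 1) * 2 ^ q *
          Real.exp (-(n * (r ^ (((d : ℝ) - 1) / 2) / 2 ^ d * ε ^ (((d : ℝ) + 1) / 2))))) := by
  rcases le_or_gt ε r with hεr | hrε
  · refine (lintegral_hausdorffDist_rpow_le_of_le hd hq hK hε hεr).trans
      (ENNReal.ofReal_le_ofReal ?_)
    rw [sqrt_mul_div_two_pow_mul_div_two hd hr0.le hε.le]
    have hε1 : ε ≤ 1 := hεr.trans hr1
    have hnet : (1 + 2 / ε) ^ d ≤ (3 / ε) ^ (d + 1) := calc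
      (1 + 2 / ε) ^ d ≤ (3 / ε) ^ d := by
        gcongr; rw [le_div_iff₀ hε]; nlinarith [div_mul_cancel₀ 2 hε.ne']
      _ ≤ (3 / ε) ^ (d + 1) := pow_le_pow_right₀ (by rw [le_div_iff₀ hε]; linarith) d.le_succ
    gcongr
    exact le_div_self (by positivity) hr0 hr1
  · refine (lintegral_hausdorffDist_rpow_le_two_rpow hq hK).trans (ENNReal.ofReal_le_ofReal ?_)
    have h2 : (2 : ℝ) ^ q ≤ (3 * ε / r) ^ q := by
      gcongr; rw [le_div_iff₀ hr0]; linarith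
    have : 0 ≤ (3 / ε) ^ (d + 1) * 2 ^ q *
        Real.exp (-(n * (r ^ (((d : ℝ) - 1) / 2) / 2 ^ d * ε ^ (((d : ℝ) + 1) / 2)))) := by
      positivity
    linarith

lemma inv_two_mul_le_log_div_self {n : ℕ} (hn : 2 ≤ n) : (2 * n : ℝ)⁻¹ ≤ Real.log n / n := by
  have hn' : (2 : ℝ) ≤ n := by exact_mod_cast hn
  have hlog : (1 / 2 : ℝ) ≤ Real.log n :=
    (by linarith [Real.log_two_gt_d9] : (1 / 2 : ℝ) ≤ Real.log 2).trans
      (Real.log_le_log two_pos hn')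
  rw [mul_inv, div_eq_mul_inv]
  gcongr
  linarith

lemma natCast_rpow_neg_le {n : ℕ} (hn : 2 ≤ n) {q β : ℝ} (hβ : 0 ≤ β) (hβq : β ≤ q) :
    (n : ℝ) ^ (-q) ≤ 2 ^ q * (Real.log n / n) ^ β := by
  have hn' : (2 : ℝ) ≤ n := by exact_mod_cast hn
  have hsmall : (2 * n : ℝ)⁻¹ ≤ 1 := inv_le_one_of_one_le₀ (by linarith)
  calc (n : ℝ) ^ (-q) = 2 ^ q * (2 * n : ℝ)⁻¹ ^ q := by
        rw [Real.inv_rpow (by positivity), Real.mul_rpow zero_le_two (by positivity),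
          Real.rpow_neg (by positivity)]
        field_simp
    _ ≤ 2 ^ q * (2 * n : ℝ)⁻¹ ^ β := by
        gcongr 2 ^ q * ?_
        exact Real.rpow_le_rpow_of_exponent_ge (by positivity) hsmall hβq
    _ ≤ 2 ^ q * (Real.log n / n) ^ β := by
        gcongr
        exact inv_two_mul_le_log_div_self hn

lemma three_div_pow_mul_exp_le {d n : ℕ} (hd : 1 ≤ d) (hn : 2 ≤ n) {q c₀ ε : ℝ} (hq : 0 ≤ q)
    (hc₀ : 0 < c₀) (hε : 0 < ε) (hεa : ε ^ (((d : ℝ) + 1) / 2) = (q + 2) / c₀ * (Real.log n / n)) :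
    (3 / ε) ^ (d + 1) * 2 ^ q * Real.exp (-(n * (c₀ * ε ^ (((d : ℝ) + 1) / 2)))) ≤
      3 ^ (d + 1) * (2 * c₀ / (q + 2)) ^ 2 * 4 ^ q *
        (Real.log n / n) ^ (2 * q / ((d : ℝ) + 1)) := by
  have hn0 : (0 : ℝ) < n := by positivity
  have hexp : Real.exp (-(n * (c₀ * ε ^ (((d : ℝ) + 1) / 2)))) =
      (n : ℝ) ^ (-q) * ((n : ℝ) ^ 2)⁻¹ := by
    rw [hεa, Real.rpow_neg hn0.le, ← mul_inv, ← Real.rpow_natCast, ← Real.rpow_add hn0,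
      Real.rpow_def_of_pos hn0, ← Real.exp_neg]
    congr 1
    field_simp
    push_cast
    ring
  have hpow : ε ^ (d + 1) = (ε ^ (((d : ℝ) + 1) / 2)) ^ 2 := by
    rw [← Real.rpow_natCast, ← Real.rpow_mul_natCast hε.le]
    push_cast
    ring_nf
  have hlow : ((q + 2) / (2 * c₀ * n)) ^ 2 ≤ ε ^ (d + 1) := by
    rw [hpow, hεa]
    gcongr
    calc (q + 2) / (2 * c₀ * n) = (q + 2) / c₀ * (2 * n : ℝ)⁻¹ := by field_simp
      _ ≤ _ := by gcongr; exact inv_two_mul_le_log_div_self hn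
  have hβq : 2 * q / ((d : ℝ) + 1) ≤ q := by
    rw [div_le_iff₀ (by positivity)]
    nlinarith [(by exact_mod_cast hd : (1 : ℝ) ≤ d)]
  calc (3 / ε) ^ (d + 1) * 2 ^ q * Real.exp (-(n * (c₀ * ε ^ (((d : ℝ) + 1) / 2))))
      = 3 ^ (d + 1) * (ε ^ (d + 1))⁻¹ * ((n : ℝ) ^ 2)⁻¹ * (2 ^ q * (n : ℝ) ^ (-q)) := by
        rw [hexp, div_pow]; ring
    _ ≤ 3 ^ (d + 1) * (((q + 2) / (2 * c₀ * n)) ^ 2)⁻¹ * ((n : ℝ) ^ 2)⁻¹ *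
          (2 ^ q * (2 ^ q * (Real.log n / n) ^ (2 * q / ((d : ℝ) + 1)))) := by
        gcongr
        exact natCast_rpow_neg_le hn (by positivity) hβq
    _ = 3 ^ (d + 1) * (2 * c₀ / (q + 2)) ^ 2 * 4 ^ q *
          (Real.log n / n) ^ (2 * q / ((d : ℝ) + 1)) := by
        rw [show (4 : ℝ) ^ q = 2 ^ q * 2 ^ q by
          rw [← Real.mul_rpow zero_le_two zero_le_two]; norm_num]
        field_simp

theorem stmt10 (d : ℕ) (hd : 1 ≤ d) (r : ℝ) (hr0 : 0 < r) (hr1 : r ≤ 1)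
    (q : ℝ) (hq : 1 ≤ q) :
    ∃ C > (0:ℝ), ∀ n : ℕ, 2 ≤ n → ∀ K ∈ Kdr1 d r,
      ∫⁻ ω, ENNReal.ofReal (hausdorffDist (hullOf ω) K ^ q) ∂(jointLaw n (unifOn K))
        ≤ ENNReal.ofReal (C * (Real.log n / n) ^ (2*q/((d:ℝ)+1))) := by
  have hq0 : 0 ≤ q := by linarith
  set c₀ := r ^ (((d : ℝ) - 1) / 2) / 2 ^ d
  have hc₀ : 0 < c₀ := by positivity
  set A := (q + 2) / c₀
  refine ⟨(3 / r) ^ q * A ^ (2 * q / ((d : ℝ) + 1)) + 3 ^ (d + 1) * (2 * c₀ / (q + 2)) ^ 2 * 4 ^ q,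
    by positivity, fun n hn K hK => ?_⟩
  have hlog : 0 < Real.log n := Real.log_pos (by exact_mod_cast hn)
  -- chosen so that `n c₀ ε ^ ((d + 1) / 2) = (q + 2) log n`
  set ε := (A * (Real.log n / n)) ^ (2 / ((d : ℝ) + 1))
  have hε : 0 < ε := by positivity
  have hεa : ε ^ (((d : ℝ) + 1) / 2) = A * (Real.log n / n) := by
    rw [← Real.rpow_mul (by positivity),
      div_mul_div_cancel₀ (by positivity : (d : ℝ) + 1 ≠ 0), div_self two_ne_zero, Real.rpow_one]
  have hεq : (3 * ε / r) ^ q = (3 / r) ^ q * A ^ (2 * q / ((d : ℝ) + 1)) *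
      (Real.log n / n) ^ (2 * q / ((d : ℝ) + 1)) := by
    rw [mul_div_right_comm, Real.mul_rpow (by positivity) hε.le, ← Real.rpow_mul (by positivity),
      Real.mul_rpow (by positivity) (by positivity), mul_assoc]
    ring_nf
  refine (lintegral_hausdorffDist_rpow_le hd hr0 hr1 hq0 hK hε).trans (ENNReal.ofReal_le_ofReal ?_)
  rw [add_mul, hεq]
  exact add_le_add le_rfl (three_div_pow_mul_exp_le hd hn hq0 hc₀ hε hεa)
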